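/- arXiv:2511.06526 — 4 statements merged into one kernel-verified Lean document; each statement's English description precedes it below -/
import Mathlib

section
/- If T is a tree with no uncountable branch (no uncountable linearly ordered subset), then the tree σT of well-ordered downward-closed chains of T ordered by end-extension also has no uncountable branch. -/
/-- The σ-tree of well-ordered downward-closed chains of `T`. -/
def SigmaTreeW (T : Type u) [Preorder T] : Type u :=
  {c : Set T // IsChain (· ≤ ·) c ∧ (∀ x ∈ c, ∀ y : T, y ≤ x → y ∈ c) ∧
    c.WellFoundedOn (· < ·)}

/-- The end-extension order on the σ-tree. -/
def SigmaWLE {T : Type u} [Preorder T] (c d : SigmaTreeW T) : Prop :=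
  c.1 ⊆ d.1 ∧ ∀ x ∈ c.1, ∀ y ∈ d.1, y ∉ c.1 → x < y

/-!
Let `C` be a chain in `σT`. Its union `U` is a chain of `T`, hence countable, and it is
well-founded: a descending sequence in `U` starts in some `c ∈ C` and then stays in `c`, since
`c` is downward closed. Every member of `C` is a downward-closed subset of the countable
well-ordered set `U`, so it is either `U` itself or the set of elements of `U` below the least
element of `U` outside it. Thus `c ↦ c.1` injects `C` into a countable family of sets.
-/

open Set

section

variable {α : Type*}

theorem IsChain.sUnion {r : α → α → Prop} {S : Set (Set α)} (hS : IsChain (· ⊆ ·) S)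
    (h : ∀ s ∈ S, IsChain r s) : IsChain r (⋃₀ S) := by
  rintro x ⟨s, hs, hx⟩ y ⟨t, ht, hy⟩ hxy
  obtain ⟨u, hu, hsu, htu⟩ := hS.directedOn s hs t ht
  exact h u hu (hsu hx) (htu hy) hxy

theorem Set.IsWF.sUnion_of_isLowerSet [Preorder α] {S : Set (Set α)}
    (hlow : ∀ s ∈ S, IsLowerSet s) (hwf : ∀ s ∈ S, s.IsWF) : (⋃₀ S).IsWF := by
  rw [isWF_iff_no_descending_seq]
  intro f hf hfS
  obtain ⟨s, hs, hf0⟩ := hfS 0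
  exact isWF_iff_no_descending_seq.mp (hwf s hs) f hf
    fun n => hlow s hs (hf.antitone n.zero_le) hf0

theorem exists_eq_inter_Iio_of_isLowerSet [PartialOrder α] {U s : Set α}
    (hU : IsChain (· ≤ ·) U) (hwf : U.IsWF) (hsU : s ⊆ U) (hlow : IsLowerSet s) (hne : s ≠ U) :
    ∃ m ∈ U, s = U ∩ Iio m := by
  obtain ⟨m, hm⟩ := (hwf.mono sdiff_subset).exists_minimal (sdiff_nonempty.mpr fun h =>
    hne (hsU.antisymm h))
  obtain ⟨hmU, hms⟩ := hm.prop
  refine ⟨m, hmU, Subset.antisymm (fun y hy => ⟨hsU hy, ?_⟩) fun y ⟨hyU, hym⟩ => ?_⟩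
  · have hym : y ≠ m := fun h => hms (h ▸ hy)
    exact (hU.total (hsU hy) hmU).resolve_right (fun hmy => hms (hlow hmy hy)) |>.lt_of_ne hym
  · by_contra hys
    exact hm.not_lt ⟨hyU, hys⟩ hym

theorem Set.Countable.setOf_isLowerSet_subset [PartialOrder α] {U : Set α} (hc : U.Countable)
    (hU : IsChain (· ≤ ·) U) (hwf : U.IsWF) : {s | s ⊆ U ∧ IsLowerSet s}.Countable := by
  refine ((hc.image fun m => U ∩ Iio m).insert U).mono fun s ⟨hsU, hlow⟩ => ?_
  by_cases hne : s = U
  · exact Or.inl hne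
  · obtain ⟨m, hmU, rfl⟩ := exists_eq_inter_Iio_of_isLowerSet hU hwf hsU hlow hne
    exact Or.inr ⟨m, hmU, rfl⟩

end

/-- If `T` is a tree with no uncountable branch (every linearly ordered subset of `T` is
countable), then `σT`, the tree of well-ordered downward-closed chains of `T` ordered by
end-extension, also has no uncountable branch. -/
theorem stmt3 {T : Type u} [PartialOrder T]
    (hT : ∀ c : Set T, IsChain (· ≤ ·) c → c.Countable) :
    ∀ C : Set (SigmaTreeW T), IsChain SigmaWLE C → C.Countable := by
  intro C hC
  have hlow : ∀ c : SigmaTreeW T, IsLowerSet c.1 := fun c _ _ hle hx => c.2.2.1 _ hx _ hle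
  set U := ⋃₀ (Subtype.val '' C)
  have hU_chain : IsChain (· ≤ ·) U :=
    (hC.image_of_map_rel _ (· ⊆ ·) Subtype.val fun _ _ h => h.1).sUnion (by
      rintro _ ⟨c, -, rfl⟩
      exact c.2.1)
  have hU_wf : U.IsWF := by
    refine IsWF.sUnion_of_isLowerSet ?_ ?_ <;> rintro _ ⟨c, -, rfl⟩
    exacts [hlow c, c.2.2.2]
  refine countable_of_injective_of_countable_image Subtype.val_injective.injOn
    ((hT U hU_chain).setOf_isLowerSet_subset hU_chain hU_wf |>.mono ?_)
  rintro _ ⟨c, hc, rfl⟩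
  exact ⟨subset_sUnion_of_mem (mem_image_of_mem _ hc), hlow c⟩
end

section
/- A condition p is strongly (P, M)-generic if and only if p forces that the intersection of the generic filter with M is a V-generic filter on the poset P ∩ M. -/
/-! For `q` with residue `r`, a dense `D ⊆ M` has an element `d ≤ r`, and `d` is compatible
with `q`. Conversely, if `q` has no residue then the conditions of `M` incompatible with `q` are
dense in `M`, and no extension of `q` lies below one of them. -/

namespace Forcing

variable {P : Type*} [Preorder P]

def Compatible (a b : P) : Prop := ∃ z, z ≤ a ∧ z ≤ b

def IsResidue (M : Set P) (q r : P) : Prop := r ∈ M ∧ ∀ w ∈ M, w ≤ r → Compatible w q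

def IsDenseIn (M D : Set P) : Prop := ∀ w ∈ M, ∃ d ∈ D, d ≤ w

def incompatibleIn (M : Set P) (q : P) : Set P := {w | w ∈ M ∧ ¬Compatible w q}

theorem IsResidue.exists_le_mem {M D : Set P} {q r : P} (hr : IsResidue M q r) (hDM : D ⊆ M)
    (hD : IsDenseIn M D) : ∃ z ≤ q, ∃ d ∈ D, z ≤ d := by
  obtain ⟨d, hdD, hdr⟩ := hD r hr.1
  obtain ⟨z, hzd, hzq⟩ := hr.2 d (hDM hdD) hdr
  exact ⟨z, hzq, d, hdD, hzd⟩

theorem isDenseIn_incompatibleIn {M : Set P} {q : P} (hq : ∀ r, ¬IsResidue M q r) :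
    IsDenseIn M (incompatibleIn M q) := by
  intro w hw
  simp only [IsResidue, not_and, not_forall] at hq
  obtain ⟨d, hdM, hdw, hdq⟩ := hq w hw
  exact ⟨d, ⟨hdM, hdq⟩, hdw⟩

theorem not_exists_le_mem_incompatibleIn (M : Set P) (q : P) :
    ¬∃ z ≤ q, ∃ d ∈ incompatibleIn M q, z ≤ d :=
  fun ⟨z, hzq, _, ⟨_, hdq⟩, hzd⟩ => hdq ⟨z, hzd, hzq⟩

theorem exists_isResidue_iff (M : Set P) (q : P) :
    (∃ r, IsResidue M q r) ↔ ∀ D ⊆ M, IsDenseIn M D → ∃ z ≤ q, ∃ d ∈ D, z ≤ d := by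
  refine ⟨fun ⟨r, hr⟩ D hDM hD => hr.exists_le_mem hDM hD, fun h => ?_⟩
  by_contra! hq
  exact not_exists_le_mem_incompatibleIn M q <|
    h _ (fun _ hw => hw.1) (isDenseIn_incompatibleIn hq)

end Forcing

/-- The forcing statement is rendered combinatorially: `p` forces that `Ġ ∩ M` meets `D` iff
every `q ≤ p` has an extension below some element of `D`. -/
theorem stmt6 {P : Type*} [Preorder P] (M : Set P) (p : P) :
    (∀ q : P, q ≤ p → ∃ r ∈ M, ∀ w ∈ M, w ≤ r → ∃ z : P, z ≤ w ∧ z ≤ q) ↔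
    (∀ D : Set P, D ⊆ M → (∀ w ∈ M, ∃ d ∈ D, d ≤ w) →
      ∀ q : P, q ≤ p → ∃ r : P, r ≤ q ∧ ∃ d ∈ D, r ≤ d) :=
  (forall₂_congr fun q _ => Forcing.exists_isResidue_iff M q).trans
    ⟨fun h D hDM hD q hq => h q hq D hDM hD, fun h q hq D hDM hD => h D hDM hD q hq⟩
end

section
/- Let κ ≤ λ be regular cardinals and let M be a set such that M ∩ λ is an ordinal, κ ∈ M, and the Levy collapse conditions are suitably absolute to M. Then for any condition p in Coll(κ, <λ), the restriction p ∩ M is a residue of p into M: every condition w ∈ Coll(κ, <λ) ∩ M extending p ∩ M is compatible with p. Consequently Coll(κ, <λ) is strongly proper with respect to M. -/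
/-- A condition in the Levy collapse `Coll(κ, <λ)`: a partial function `p : λ × κ → λ` (coded as
a functional set of triples) of size `< κ` with `p(α, β) < α` for all `(α, β)` in its domain.
Conditions are ordered by reverse inclusion, so `q ≤ p` iff `p ⊆ q`. -/
def IsLevyCond (κ lam : Cardinal.{0}) (p : Set ((Ordinal × Ordinal) × Ordinal)) : Prop :=
  (∀ x ∈ p, x.1.1 < lam.ord ∧ x.1.2 < κ.ord ∧ x.2 < x.1.1) ∧
  (∀ x ∈ p, ∀ y ∈ p, x.1 = y.1 → x.2 = y.2) ∧
  Cardinal.mk p < Cardinal.lift.{1} κ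

/-! The restriction `p ∩ M` of a condition is its part with first coordinates below `μ = M ∩ λ`.
It is a residue of `p` because any `w ∈ M` extending it can only meet the domain of `p` below `μ`,
where the two already agree, so `w ∪ p` is again a function; it has size `< κ` as `κ` is
infinite. For strong properness one may therefore take `q = p` itself. -/

namespace IsLevyCond

variable {κ lam : Cardinal.{0}} {p w : Set ((Ordinal × Ordinal) × Ordinal)}

theorem mono (hp : IsLevyCond κ lam p) (hwp : w ⊆ p) : IsLevyCond κ lam w :=
  ⟨fun x hx => hp.1 x (hwp hx), fun x hx y hy => hp.2.1 x (hwp hx) y (hwp hy),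
    (Cardinal.mk_le_mk_of_subset hwp).trans_lt hp.2.2⟩

theorem union (hκ : Cardinal.aleph0 ≤ κ) (hp : IsLevyCond κ lam p) (hw : IsLevyCond κ lam w)
    (hagree : ∀ x ∈ p, ∀ y ∈ w, x.1 = y.1 → x.2 = y.2) : IsLevyCond κ lam (p ∪ w) := by
  refine ⟨?_, ?_, ?_⟩
  · rintro x (hx | hx)
    exacts [hp.1 x hx, hw.1 x hx]
  · rintro x (hx | hx) y (hy | hy) hxy
    · exact hp.2.1 x hx y hy hxy
    · exact hagree x hx y hy hxy
    · exact (hagree y hy x hx hxy.symm).symm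
    · exact hw.2.1 x hx y hy hxy
  · have hκ' : Cardinal.aleph0 ≤ Cardinal.lift.{1} κ := by simpa using Cardinal.lift_le.{1}.2 hκ
    exact (Cardinal.mk_union_le p w).trans_lt (Cardinal.add_lt_of_lt hκ' hp.2.2 hw.2.2)

theorem exists_le_of_inter_lt_subset (hκ : Cardinal.aleph0 ≤ κ) {μ : Ordinal}
    (hp : IsLevyCond κ lam p) (hw : IsLevyCond κ lam w ∧ ∀ x ∈ w, x.1.1 < μ)
    (hsub : p ∩ {x | x.1.1 < μ} ⊆ w) : ∃ q, IsLevyCond κ lam q ∧ w ⊆ q ∧ p ⊆ q := by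
  refine ⟨w ∪ p, hw.1.union hκ hp fun x hx y hy hxy => ?_, Set.subset_union_left,
    Set.subset_union_right⟩
  have hyμ : y.1.1 < μ := hxy ▸ hw.2 x hx
  exact hw.1.2.1 x hx y (hsub ⟨hy, hyμ⟩) hxy

theorem inter_lt_isResidue (hκ : Cardinal.aleph0 ≤ κ) (hp : IsLevyCond κ lam p) (μ : Ordinal) :
    p ∩ {x | x.1.1 < μ} ∈ {w | IsLevyCond κ lam w ∧ ∀ x ∈ w, x.1.1 < μ} ∧
      ∀ w ∈ {w | IsLevyCond κ lam w ∧ ∀ x ∈ w, x.1.1 < μ}, p ∩ {x | x.1.1 < μ} ⊆ w →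
        ∃ q, IsLevyCond κ lam q ∧ w ⊆ q ∧ p ⊆ q :=
  ⟨⟨hp.mono Set.inter_subset_left, fun _ hx => hx.2⟩,
    fun _ hw => hp.exists_le_of_inter_lt_subset hκ hw⟩

end IsLevyCond

theorem stmt7_general (κ lam : Cardinal.{0}) (hκ : κ.IsRegular)
    (μ : Ordinal)
    (M : Set (Set ((Ordinal × Ordinal) × Ordinal)))
    (hM : M = {w | IsLevyCond κ lam w ∧ ∀ x ∈ w, x.1.1 < μ}) :
    (∀ p : Set ((Ordinal × Ordinal) × Ordinal), IsLevyCond κ lam p →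
      (p ∩ {x | x.1.1 < μ}) ∈ M ∧
      ∀ w ∈ M, (p ∩ {x | x.1.1 < μ}) ⊆ w →
        ∃ q : Set ((Ordinal × Ordinal) × Ordinal), IsLevyCond κ lam q ∧ w ⊆ q ∧ p ⊆ q) ∧
    -- strong properness with respect to M:
    (∀ p ∈ M, ∃ q : Set ((Ordinal × Ordinal) × Ordinal), IsLevyCond κ lam q ∧ p ⊆ q ∧
      ∀ q' : Set ((Ordinal × Ordinal) × Ordinal), IsLevyCond κ lam q' → q ⊆ q' →
        ∃ r ∈ M, ∀ w ∈ M, r ⊆ w →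
          ∃ z : Set ((Ordinal × Ordinal) × Ordinal), IsLevyCond κ lam z ∧ w ⊆ z ∧ q' ⊆ z) := by
  subst hM
  exact ⟨fun p hp => hp.inter_lt_isResidue hκ.aleph0_le μ,
    fun p hp => ⟨p, hp.1, subset_rfl, fun q' hq' _ => ⟨_, hq'.inter_lt_isResidue hκ.aleph0_le μ⟩⟩⟩

/-- Let `κ ≤ λ` be regular cardinals and `M` a suitable model whose intersection with `λ` is an
ordinal `μ` and whose Levy collapse conditions are exactly those with domain below `μ`.  Then for
every condition `p ∈ Coll(κ, <λ)`, the restriction `p ∩ M` is a condition of `M` and is a residue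
of `p` into `M`: every `w ∈ Coll(κ, <λ) ∩ M` extending `p ∩ M` is compatible with `p`.
Consequently `Coll(κ, <λ)` is strongly proper with respect to `M`. -/
theorem stmt7 (κ lam : Cardinal.{0}) (hκ : κ.IsRegular) (hlam : lam.IsRegular)
    (hkl : κ ≤ lam) (μ : Ordinal) (hμ : μ ≤ lam.ord)
    (M : Set (Set ((Ordinal × Ordinal) × Ordinal)))
    (hM : M = {w | IsLevyCond κ lam w ∧ ∀ x ∈ w, x.1.1 < μ}) :
    (∀ p : Set ((Ordinal × Ordinal) × Ordinal), IsLevyCond κ lam p →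
      (p ∩ {x | x.1.1 < μ}) ∈ M ∧
      ∀ w ∈ M, (p ∩ {x | x.1.1 < μ}) ⊆ w →
        ∃ q : Set ((Ordinal × Ordinal) × Ordinal), IsLevyCond κ lam q ∧ w ⊆ q ∧ p ⊆ q) ∧
    -- strong properness with respect to M:
    (∀ p ∈ M, ∃ q : Set ((Ordinal × Ordinal) × Ordinal), IsLevyCond κ lam q ∧ p ⊆ q ∧
      ∀ q' : Set ((Ordinal × Ordinal) × Ordinal), IsLevyCond κ lam q' → q ⊆ q' →
        ∃ r ∈ M, ∀ w ∈ M, r ⊆ w →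
          ∃ z : Set ((Ordinal × Ordinal) × Ordinal), IsLevyCond κ lam z ∧ w ⊆ z ∧ q' ⊆ z) :=
  stmt7_general κ lam hκ μ M hM
end

section
/- If κ is a weakly compact cardinal, then the weakly compact filter F_wc, generated by the sets X_{A,φ} = {α < κ : if V_κ ⊨ φ(A) then V_α ⊨ φ(A ∩ V_α)} for Π¹₁-formulas φ and A ⊆ V_κ, is a proper filter on κ: every finite intersection of generators is nonempty (indeed unbounded in κ). -/
open FirstOrder

/-- The first-order language with one binary relation `∈`, one unary predicate for the parameter
`A`, and one unary predicate for the second-order variable `X`. -/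
def LWC : FirstOrder.Language :=
  { Functions := fun _ => Empty
    Relations := fun n => match n with
      | 1 => Fin 2
      | 2 => Unit
      | _ => Empty }

/-- The rank-initial segment `V_α` of the set-theoretic universe. -/
def VType (α : Ordinal.{0}) : Type 1 := {x : ZFSet.{0} // x.rank < α}

/-- The `LWC`-structure on `V_α` with membership `∈`, the predicate `A ∩ V_α`, and the predicate
`X ∩ V_α` interpreting the second-order variable. -/
def strWC (α : Ordinal.{0}) (A X : Set ZFSet.{0}) : LWC.Structure (VType α) where
  funMap := fun {_} f _ => f.elim
  RelMap := fun {n} r v =>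
    match n, r, v with
    | 1, i, v => if (show Fin 2 from i) = 0 then (v 0).1 ∈ A else (v 0).1 ∈ X
    | 2, _, v => (v 0).1 ∈ (v 1).1

/-- `V_α ⊨ φ(A ∩ V_α)` for the Π¹₁-formula `∀ X ψ`: the first-order sentence `ψ` (in the
language with `∈`, `A`, `X`) holds in `V_α` for every interpretation `X` of the second-order
variable. -/
def SatPi11 (ψ : LWC.Sentence) (α : Ordinal.{0}) (A : Set ZFSet.{0}) : Prop :=
  ∀ X : Set ZFSet.{0},
    letI := strWC α A X
    ψ.Realize (VType α)

/-- `κ` is weakly compact (Π¹₁-indescribable): every Π¹₁ statement true in `V_κ` with a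
parameter `A ⊆ V_κ` reflects to some `V_α` with `α < κ`. -/
def WeaklyCompactWC (κ : Ordinal.{0}) : Prop :=
  ∀ (ψ : LWC.Sentence) (A : Set ZFSet.{0}), SatPi11 ψ κ A → ∃ α < κ, SatPi11 ψ α A

/-!
Finitely many Π¹₁ statements `ψ i (A i)` true in `V_κ` combine into a single one: merge the
parameters into `B = {⟨tower i, x⟩ | x ∈ A i}` and replace every atom `A x` of `ψ i` by
`⟨tower i, x⟩ ∈ B`. This translation is faithful in every `V_α` closed under `x ↦ ⟨tower i, x⟩`;
the combined sentence asserts that closure, and `V_κ` has it because `κ` is a limit ordinal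
(reflecting `∃ x, x ∈ {γ}` puts `γ` below some `α < κ`). Reflecting the combined sentence gives
one `α < κ` for all `i`. Adding `∃ x, x ∈ {β}`, true in `V_α` iff `β < α`, to the family makes
`α > β`, and the generators whose hypothesis fails in `V_κ` are replaced by `⊤`.
-/

namespace LWC

open FirstOrder.Language BoundedFormula

variable {k m : ℕ} {α : Ordinal.{0}} {B X : Set ZFSet.{0}} {xs : Fin k → VType α}

theorem rank_lt_of_mem_vType {x : VType α} {y : ZFSet.{0}} (h : y ∈ x.1) :
    y.rank < α :=
  (ZFSet.rank_lt_of_mem h).trans x.2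

def tower : ℕ → ZFSet.{0}
  | 0 => ∅
  | i + 1 => {tower i}

@[simp] theorem rank_tower (i : ℕ) : (tower i).rank = i := by
  induction i with
  | zero => exact ZFSet.rank_empty
  | succ i ih => rw [tower, ZFSet.rank_singleton, ih, Order.succ_eq_add_one, Nat.cast_succ]

def code (i : ℕ) (x : ZFSet.{0}) : ZFSet.{0} := ZFSet.pair (tower i) x

theorem code_injective : Function.Injective2 code := fun i j x y h => by
  obtain ⟨hij, rfl⟩ := ZFSet.pair_injective h
  exact ⟨by simpa using congrArg ZFSet.rank hij, rfl⟩

theorem rank_tower_lt_rank_code (i : ℕ) (x : ZFSet.{0}) : (tower i).rank < (code i x).rank :=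
  (ZFSet.rank_lt_of_mem (ZFSet.mem_singleton.2 rfl)).trans
    (ZFSet.rank_lt_of_mem (ZFSet.mem_insert _ _))

theorem rank_code_lt (hα : Order.IsSuccLimit α) (i : ℕ) {x : ZFSet.{0}}
    (hx : x.rank < α) : (code i x).rank < α := by
  have hi : (tower i).rank < α := (rank_tower i).symm ▸ Ordinal.natCast_lt_of_isSuccLimit hα i
  simp only [code, ZFSet.pair, ZFSet.rank_pair, ZFSet.rank_singleton]
  exact max_lt (hα.succ_lt (hα.succ_lt hi)) (hα.succ_lt (max_lt (hα.succ_lt hi) (hα.succ_lt hx)))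

abbrev BF (k : ℕ) := LWC.BoundedFormula Empty k

def memRel : LWC.Relations 2 := ()

def predARel : LWC.Relations 1 := (0 : Fin 2)

def memF (a b : Fin k) : BF k := memRel.boundedFormula₂ (&a) (&b)

def eqF (a b : Fin k) : BF k := (&a).bdEqual (&b)

def predAF (a : Fin k) : BF k := predARel.boundedFormula₁ (&a)

/-- Satisfaction in `(V_α, ∈, B, X)`; the structure is passed explicitly since several
structures on `VType α` are in play at once. -/
def Holds (α : Ordinal.{0}) (B X : Set ZFSet.{0}) (φ : BF k) (xs : Fin k → VType α) : Prop :=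
  @BoundedFormula.Realize LWC (VType α) (strWC α B X) Empty k φ default xs

theorem satPi11_iff {ψ : LWC.Sentence} : SatPi11 ψ α B ↔ ∀ X, Holds α B X ψ default := Iff.rfl

@[simp] theorem holds_memF {a b : Fin k} : Holds α B X (memF a b) xs ↔ (xs a).1 ∈ (xs b).1 :=
  Iff.rfl

@[simp] theorem holds_eqF {a b : Fin k} : Holds α B X (eqF a b) xs ↔ (xs a).1 = (xs b).1 :=
  Subtype.ext_iff

@[simp] theorem holds_predAF {a : Fin k} : Holds α B X (predAF a) xs ↔ (xs a).1 ∈ B := Iff.rfl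

@[simp] theorem holds_top : Holds α B X (⊤ : BF k) xs := by
  let _ := strWC α B X; exact realize_top.2 trivial

theorem satPi11_top : SatPi11 ⊤ α B := fun _ => holds_top

@[simp] theorem holds_not {φ : BF k} : Holds α B X (∼φ) xs ↔ ¬Holds α B X φ xs := by
  let _ := strWC α B X; exact realize_not

@[simp] theorem holds_inf {φ ψ : BF k} :
    Holds α B X (φ ⊓ ψ) xs ↔ Holds α B X φ xs ∧ Holds α B X ψ xs := by
  let _ := strWC α B X; exact realize_inf

@[simp] theorem holds_sup {φ ψ : BF k} :
    Holds α B X (φ ⊔ ψ) xs ↔ Holds α B X φ xs ∨ Holds α B X ψ xs := by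
  let _ := strWC α B X; exact realize_sup

@[simp] theorem holds_iff {φ ψ : BF k} :
    Holds α B X (φ ⇔ ψ) xs ↔ (Holds α B X φ xs ↔ Holds α B X ψ xs) := by
  let _ := strWC α B X; exact realize_iff

@[simp] theorem holds_all {φ : BF (k + 1)} :
    Holds α B X (∀' φ) xs ↔ ∀ a, Holds α B X φ (Fin.snoc xs a) := by
  let _ := strWC α B X; exact realize_all

@[simp] theorem holds_ex {φ : BF (k + 1)} :
    Holds α B X (∃' φ) xs ↔ ∃ a, Holds α B X φ (Fin.snoc xs a) := by
  let _ := strWC α B X; exact realize_ex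

@[simp] theorem holds_iInf {m : ℕ} {φ : Fin m → BF k} :
    Holds α B X (iInf φ) xs ↔ ∀ i, Holds α B X (φ i) xs := by
  let _ := strWC α B X; exact realize_iInf

def isUPairF (z u v : Fin k) : BF k :=
  ∀' (memF (Fin.last k) z.castSucc ⇔ (eqF (Fin.last k) u.castSucc ⊔ eqF (Fin.last k) v.castSucc))

@[simp] theorem holds_isUPairF {z u v : Fin k} :
    Holds α B X (isUPairF z u v) xs ↔ (xs z).1 = {(xs u).1, (xs v).1} := by
  simp only [isUPairF, holds_all, holds_iff, holds_sup, holds_memF, holds_eqF, Fin.snoc_last,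
    Fin.snoc_castSucc]
  constructor
  · intro h
    ext w
    refine ⟨fun hw => ?_, fun hw => ?_⟩
    · exact ZFSet.mem_pair.2 ((h ⟨w, rank_lt_of_mem_vType hw⟩).1 hw)
    · rcases ZFSet.mem_pair.1 hw with rfl | rfl
      exacts [(h (xs u)).2 (Or.inl rfl), (h (xs v)).2 (Or.inr rfl)]
  · intro h a
    rw [h, ZFSet.mem_pair]

def isKPairF (p u x : Fin k) : BF k :=
  ∃' ∃' (isUPairF (Fin.last k).castSucc u.castSucc.castSucc u.castSucc.castSucc ⊓
    isUPairF (Fin.last (k + 1)) u.castSucc.castSucc x.castSucc.castSucc ⊓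
    isUPairF p.castSucc.castSucc (Fin.last k).castSucc (Fin.last (k + 1)))

@[simp] theorem holds_isKPairF {p u x : Fin k} :
    Holds α B X (isKPairF p u x) xs ↔ (xs p).1 = ZFSet.pair (xs u).1 (xs x).1 := by
  simp only [isKPairF, holds_ex, holds_inf, holds_isUPairF, Fin.snoc_last, Fin.snoc_castSucc,
    ZFSet.pair]
  constructor
  · rintro ⟨a, b, ⟨ha, hb⟩, hp⟩
    rw [hp, ha, hb, ZFSet.pair_eq_singleton]
  · intro hp
    have ha : {(xs u).1} ∈ (xs p).1 := hp ▸ ZFSet.mem_insert _ _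
    have hb : {(xs u).1, (xs x).1} ∈ (xs p).1 :=
      hp ▸ ZFSet.mem_insert_of_mem _ (ZFSet.mem_singleton.2 rfl)
    exact ⟨⟨_, rank_lt_of_mem_vType ha⟩, ⟨_, rank_lt_of_mem_vType hb⟩,
      ⟨(ZFSet.pair_eq_singleton _).symm, rfl⟩, hp⟩

def isTowerF : ℕ → ∀ {k}, Fin k → BF k
  | 0, k, x => ∀' ∼(memF (Fin.last k) x.castSucc)
  | i + 1, k, x => ∃' (isTowerF i (Fin.last k) ⊓ isUPairF x.castSucc (Fin.last k) (Fin.last k))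

@[simp] theorem holds_isTowerF {i : ℕ} {x : Fin k} :
    Holds α B X (isTowerF i x) xs ↔ (xs x).1 = tower i := by
  induction i generalizing k with
  | zero =>
    simp only [isTowerF, holds_all, holds_not, holds_memF, Fin.snoc_last, Fin.snoc_castSucc,
      tower, ZFSet.eq_empty]
    exact ⟨fun h y hy => h ⟨y, rank_lt_of_mem_vType hy⟩ hy, fun h a => h a.1⟩
  | succ i ih =>
    simp only [isTowerF, holds_ex, holds_inf, ih, holds_isUPairF, Fin.snoc_last,
      Fin.snoc_castSucc, tower, ZFSet.pair_eq_singleton]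
    constructor
    · rintro ⟨a, ha, hx⟩
      rw [hx, ha]
    · intro hx
      have hmem : tower i ∈ (xs x).1 := hx ▸ ZFSet.mem_singleton.2 rfl
      exact ⟨⟨_, rank_lt_of_mem_vType hmem⟩, rfl, hx⟩

def isCodeF (i : ℕ) (x p : Fin k) : BF k :=
  ∃' (isTowerF i (Fin.last k) ⊓ isKPairF p.castSucc (Fin.last k) x.castSucc)

@[simp] theorem holds_isCodeF {i : ℕ} {x p : Fin k} :
    Holds α B X (isCodeF i x p) xs ↔ (xs p).1 = code i (xs x).1 := by
  simp only [isCodeF, holds_ex, holds_inf, holds_isTowerF, holds_isKPairF, Fin.snoc_last,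
    Fin.snoc_castSucc]
  constructor
  · rintro ⟨u, hu, hp⟩
    rw [hp, hu, code]
  · intro hp
    exact ⟨⟨tower i, (rank_tower_lt_rank_code i _).trans (hp ▸ (xs p).2)⟩, rfl, hp⟩

def codeMemF (i : ℕ) (x : Fin k) : BF k :=
  ∃' (isCodeF i x.castSucc (Fin.last k) ⊓ predAF (Fin.last k))

@[simp] theorem holds_codeMemF {i : ℕ} {x : Fin k} :
    Holds α B X (codeMemF i x) xs ↔ (code i (xs x).1).rank < α ∧ code i (xs x).1 ∈ B := by
  simp only [codeMemF, holds_ex, holds_inf, holds_isCodeF, holds_predAF, Fin.snoc_last,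
    Fin.snoc_castSucc]
  constructor
  · rintro ⟨p, hp, hB⟩
    exact ⟨hp ▸ p.2, hp ▸ hB⟩
  · rintro ⟨hlt, hB⟩
    exact ⟨⟨_, hlt⟩, rfl, hB⟩

def codeClosedF (i : ℕ) : LWC.Sentence :=
  ∀' ∃' isCodeF i (Fin.last 0).castSucc (Fin.last 1)

theorem holds_codeClosedF {i : ℕ} :
    Holds α B X (codeClosedF i) default ↔ ∀ x : VType α, (code i x.1).rank < α := by
  simp only [codeClosedF, holds_all, holds_ex, holds_isCodeF, Fin.snoc_last, Fin.snoc_castSucc]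
  exact forall_congr' fun x => ⟨fun ⟨p, hp⟩ => hp ▸ p.2, fun h => ⟨⟨_, h⟩, rfl⟩⟩

def existsAF : LWC.Sentence := ∃' predAF (Fin.last 0)

theorem satPi11_existsAF_toZFSet {β : Ordinal.{0}} :
    SatPi11 existsAF α {β.toZFSet} ↔ β < α := by
  simp only [satPi11_iff, existsAF, holds_ex, holds_predAF, Fin.snoc_last, Set.mem_singleton_iff]
  refine ⟨fun h => ?_, fun h _ => ⟨⟨β.toZFSet, by rwa [Ordinal.rank_toZFSet]⟩, rfl⟩⟩
  obtain ⟨x, hx⟩ := h ∅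
  simpa only [hx, Ordinal.rank_toZFSet] using x.2

instance : DecidableEq (LWC.Relations 1) := inferInstanceAs (DecidableEq (Fin 2))

/-- Every term is a bound variable, as `LWC` has no function symbols. -/
def termVar : LWC.Term (Empty ⊕ Fin k) → Fin k
  | .var (.inl e) => e.elim
  | .var (.inr j) => j
  | .func f _ => Empty.elim f

theorem realize_termVar {M : Type*} [LWC.Structure M] (v : Fin k → M)
    (t : LWC.Term (Empty ⊕ Fin k)) : t.realize (Sum.elim default v) = v (termVar t) := by
  match t with
  | .var (.inl e) => exact e.elim
  | .var (.inr j) => rfl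
  | .func f _ => exact Empty.elim f

theorem holds_rel {l : ℕ} {R : LWC.Relations l} {ts : Fin l → LWC.Term (Empty ⊕ Fin k)} :
    Holds α B X (.rel R ts) xs ↔ (strWC α B X).RelMap R fun i => xs (termVar (ts i)) := by
  let _ := strWC α B X
  exact Iff.of_eq (congrArg _ (funext fun i => realize_termVar xs (ts i)))

theorem holds_equal {t₁ t₂ : LWC.Term (Empty ⊕ Fin k)} :
    Holds α B X (.equal t₁ t₂) xs ↔ xs (termVar t₁) = xs (termVar t₂) := by
  let _ := strWC α B X
  exact Iff.of_eq (congrArg₂ _ (realize_termVar xs t₁) (realize_termVar xs t₂))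

def substRel (θ : ∀ {k}, Fin k → BF k) :
    ∀ {l}, LWC.Relations l → (Fin l → LWC.Term (Empty ⊕ Fin k)) → BF k
  | 1, R, ts => if R = predARel then θ (termVar (ts 0)) else .rel R ts
  | _, R, ts => .rel R ts

/-- Replace every atom `A t` of a formula by `θ t`. -/
def substA (θ : ∀ {k}, Fin k → BF k) : ∀ {k}, BF k → BF k
  | _, .falsum => .falsum
  | _, .equal t₁ t₂ => .equal t₁ t₂
  | _, .rel R ts => substRel θ R ts
  | _, .imp φ ψ => (substA θ φ).imp (substA θ ψ)
  | _, .all φ => (substA θ φ).all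

section Subst

variable {A : Set ZFSet.{0}} {θ : ∀ {k}, Fin k → BF k}

theorem holds_substRel
    (hθ : ∀ {k} (x : Fin k) (xs : Fin k → VType α), Holds α B X (θ x) xs ↔ (xs x).1 ∈ A)
    {l : ℕ} (R : LWC.Relations l) (ts : Fin l → LWC.Term (Empty ⊕ Fin k)) :
    Holds α B X (substRel θ R ts) xs ↔ Holds α A X (.rel R ts) xs := by
  match l, R with
  | 0, R | _ + 3, R => exact Empty.elim R
  | 2, R => simp only [substRel, holds_rel]; rfl
  | 1, R =>
    by_cases hR : R = predARel
    · subst hR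
      simp only [substRel, if_pos, hθ, holds_rel]
      rfl
    · simp only [substRel, if_neg hR, holds_rel]
      obtain rfl : R = (1 : Fin 2) := (by decide : ∀ r : Fin 2, r ≠ 0 → r = 1) R hR
      rfl

theorem holds_substA
    (hθ : ∀ {k} (x : Fin k) (xs : Fin k → VType α), Holds α B X (θ x) xs ↔ (xs x).1 ∈ A)
    (φ : BF k) (xs : Fin k → VType α) :
    Holds α B X (substA θ φ) xs ↔ Holds α A X φ xs := by
  induction φ with
  | falsum => rfl
  | equal t₁ t₂ => simp only [substA, holds_equal]
  | rel R ts => exact holds_substRel hθ R ts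
  | imp φ ψ ihφ ihψ => exact imp_congr (ihφ xs) (ihψ xs)
  | all φ ih => exact forall_congr' fun a => ih _

end Subst

def codeSet (A : Fin m → Set ZFSet.{0}) : Set ZFSet.{0} := ⋃ i : Fin m, code i '' A i

theorem code_mem_codeSet {A : Fin m → Set ZFSet.{0}} {i : Fin m} {x : ZFSet.{0}} :
    code i x ∈ codeSet A ↔ x ∈ A i := by
  simp only [codeSet, Set.mem_iUnion, Set.mem_image, code_injective.eq_iff, Fin.val_inj]
  constructor
  · rintro ⟨j, y, hy, rfl, rfl⟩
    exact hy
  · exact fun hx => ⟨i, x, hx, rfl, rfl⟩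

/-- `φ` with its parameter read off the `i`-th component of a coded parameter. -/
def relativize (i : ℕ) (φ : BF k) : BF k := substA (codeMemF i) φ

theorem holds_relativize {A : Fin m → Set ZFSet.{0}} {i : Fin m}
    (hα : ∀ x : VType α, (code i x.1).rank < α) (φ : BF k) (xs : Fin k → VType α) :
    Holds α (codeSet A) X (relativize i φ) xs ↔ Holds α (A i) X φ xs :=
  holds_substA (fun x xs => by rw [holds_codeMemF, code_mem_codeSet, and_iff_right (hα _)]) φ xs

/-- One Π¹₁ sentence over the coded parameter `codeSet A` expressing all the `ψ i`; its closure
conjuncts make `relativize` faithful wherever it holds. -/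
noncomputable def conjSentence (ψ : Fin m → LWC.Sentence) : LWC.Sentence :=
  iInf fun i : Fin m => codeClosedF i ⊓ relativize i (ψ i)

theorem satPi11_conjSentence_iff {ψ : Fin m → LWC.Sentence} {A : Fin m → Set ZFSet.{0}} :
    SatPi11 (conjSentence ψ) α (codeSet A) ↔
      ∀ i : Fin m, (∀ x : VType α, (code i x.1).rank < α) ∧ SatPi11 (ψ i) α (A i) := by
  simp only [satPi11_iff, conjSentence, holds_iInf, holds_inf, holds_codeClosedF]
  constructor
  · intro h i
    have hcl := (h ∅ i).1
    exact ⟨hcl, fun X => (holds_relativize hcl _ _).1 (h X i).2⟩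
  · intro h X i
    exact ⟨(h i).1, (holds_relativize (h i).1 _ _).2 ((h i).2 X)⟩

end LWC

open LWC

namespace WeaklyCompactWC

variable {κ : Ordinal.{0}}

theorem exists_gt (hκ : WeaklyCompactWC κ) {β : Ordinal.{0}} (hβ : β < κ) : ∃ α < κ, β < α := by
  obtain ⟨α, hακ, hα⟩ := hκ _ _ (satPi11_existsAF_toZFSet.2 hβ)
  exact ⟨α, hακ, satPi11_existsAF_toZFSet.1 hα⟩

theorem isSuccLimit (hκ : WeaklyCompactWC κ) : Order.IsSuccLimit κ := by
  refine Ordinal.isSuccLimit_iff.2 ⟨?_, Order.isSuccPrelimit_of_succ_lt fun β hβ => ?_⟩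
  · obtain ⟨α, hακ, -⟩ := hκ ⊤ ∅ satPi11_top
    exact (pos_of_gt hακ).ne'
  · obtain ⟨α, hακ, hβα⟩ := hκ.exists_gt hβ
    exact (Order.succ_le_of_lt hβα).trans_lt hακ

theorem exists_lt_forall_satPi11 (hκ : WeaklyCompactWC κ) {m : ℕ} {ψ : Fin m → LWC.Sentence}
    {A : Fin m → Set ZFSet.{0}} (h : ∀ i, SatPi11 (ψ i) κ (A i)) :
    ∃ α < κ, ∀ i, SatPi11 (ψ i) α (A i) := by
  have hconj : SatPi11 (conjSentence ψ) κ (codeSet A) :=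
    satPi11_conjSentence_iff.2 fun i => ⟨fun x => rank_code_lt hκ.isSuccLimit i x.2, h i⟩
  obtain ⟨α, hακ, hα⟩ := hκ _ _ hconj
  exact ⟨α, hακ, fun i => (satPi11_conjSentence_iff.1 hα i).2⟩

theorem exists_gt_forall_satPi11 (hκ : WeaklyCompactWC κ) {β : Ordinal.{0}} (hβ : β < κ)
    {m : ℕ} {ψ : Fin m → LWC.Sentence} {A : Fin m → Set ZFSet.{0}}
    (h : ∀ i, SatPi11 (ψ i) κ (A i)) :
    ∃ α, β < α ∧ α < κ ∧ ∀ i, SatPi11 (ψ i) α (A i) := by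
  obtain ⟨α, hακ, hα⟩ := hκ.exists_lt_forall_satPi11 (ψ := Fin.cons existsAF ψ)
    (A := Fin.cons {β.toZFSet} A) (Fin.cases (satPi11_existsAF_toZFSet.2 hβ) h)
  exact ⟨α, satPi11_existsAF_toZFSet.1 (hα 0), hακ, fun i => hα i.succ⟩

end WeaklyCompactWC

/-- If `κ` is weakly compact, then the weakly compact filter, generated by the sets
`X_{A,φ} = {α < κ : V_κ ⊨ φ(A) → V_α ⊨ φ(A ∩ V_α)}`, is a proper filter on `κ`:
every finite intersection of generators is unbounded in `κ` (in particular nonempty). -/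
theorem stmt9 (κ : Ordinal.{0}) (hκ : WeaklyCompactWC κ)
    (n : ℕ) (ψ : Fin n → LWC.Sentence) (A : Fin n → Set ZFSet.{0}) :
    ∀ β < κ, ∃ α, β < α ∧
      α ∈ ⋂ i : Fin n, {α : Ordinal | α < κ ∧ (SatPi11 (ψ i) κ (A i) → SatPi11 (ψ i) α (A i))} := by
  classical
  intro β hβ
  let ψ' i := if SatPi11 (ψ i) κ (A i) then ψ i else ⊤
  have hψ' i : SatPi11 (ψ' i) κ (A i) := by
    by_cases hi : SatPi11 (ψ i) κ (A i) <;> simp only [ψ', hi, if_true, if_false, satPi11_top]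
  obtain ⟨α, hβα, hακ, hα⟩ := hκ.exists_gt_forall_satPi11 hβ hψ'
  refine ⟨α, hβα, Set.mem_iInter.2 fun i => ⟨hακ, fun hi => ?_⟩⟩
  simpa only [ψ', hi, if_true] using hα i
end
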